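/- arXiv:1804.09448 — 9 statements merged into one kernel-verified Lean document; each statement's English description precedes it below -/
import Mathlib

section
/- Let F be a field, k ≥ 1, and a_1, …, a_k ∈ F. For each j let φ_j = (1, a_j, a_j², …, a_j^{k−1}) ∈ F^k be the Vandermonde vector of a_j. Then ι(φ_1)·ι(φ_2)⋯ι(φ_k) = (∏_{1 ≤ s < t ≤ k} (a_t − a_s)) • (ι(e_1)·ι(e_2)⋯ι(e_k)) in Λ(F^k). In particular, if a_1, …, a_k are pairwise distinct, then ι(φ_1)·ι(φ_2)⋯ι(φ_k) ≠ 0. -/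
/-!
An alternating map on a free module is its value on a basis scaled by the determinant in that
basis. Applied to `ιMulti`, whose value on `v` is the wedge of the `v j`, this turns the wedge of
the Vandermonde vectors into the Vandermonde determinant times the wedge of the standard basis.
That wedge is nonzero because the determinant lifts to a linear form on the exterior algebra
taking the value `1` on it.
-/

open ExteriorAlgebra Finset

namespace AlternatingMap

variable {R M N ι : Type*} [CommRing R] [AddCommGroup M] [Module R M] [AddCommGroup N]
  [Module R N] [Fintype ι] [DecidableEq ι]

theorem eq_basis_det_smul (e : Module.Basis ι R M) (f : M [⋀^ι]→ₗ[R] N) (v : ι → M) :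
    f v = e.det v • f e := by
  have hf : f = e.det.smulRight (f e) := by
    refine e.ext_alternating fun i hi => ?_
    let σ : Equiv.Perm ι := Equiv.ofBijective i (Finite.injective_iff_bijective.1 hi)
    change f (e ∘ σ) = e.det (e ∘ σ) • f e
    simp [AlternatingMap.map_perm, Module.Basis.det_self]
  exact DFunLike.congr_fun hf v

end AlternatingMap

theorem ExteriorAlgebra.ιMulti_basis_ne_zero {R M : Type*} [CommRing R] [Nontrivial R]
    [AddCommGroup M] [Module R M] {n : ℕ} (e : Module.Basis (Fin n) R M) :
    ιMulti R n e ≠ 0 := by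
  intro h
  have hdet : liftAlternating (fun i => if h : i = n then e.det.domDomCongr (finCongr h.symm)
      else 0) (ιMulti R n e) = (1 : R) := by
    rw [liftAlternating_apply_ιMulti, dif_pos rfl]
    exact e.det_self
  rw [h, map_zero] at hdet
  exact zero_ne_one hdet

theorem Matrix.det_vandermonde_eq_prod_Iio {R : Type*} [CommRing R] {n : ℕ} (v : Fin n → R) :
    (vandermonde v).det = ∏ j : Fin n, ∏ i ∈ Iio j, (v j - v i) := by
  rw [det_vandermonde]
  exact prod_comm' fun i j => by simp

theorem vandermonde_extensor_prod_general
    {F : Type} [Field F] (k : ℕ) (a : Fin k → F) :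
    (List.ofFn (fun j : Fin k =>
        ExteriorAlgebra.ι F (fun i : Fin k => a j ^ (i : ℕ)))).prod =
      (∏ t : Fin k, ∏ s ∈ Finset.Iio t, (a t - a s)) •
        (List.ofFn (fun i : Fin k =>
          ExteriorAlgebra.ι F (Pi.single i (1 : F) : Fin k → F))).prod ∧
    (Function.Injective a →
      (List.ofFn (fun j : Fin k =>
        ExteriorAlgebra.ι F (fun i : Fin k => a j ^ (i : ℕ)))).prod ≠ 0) := by
  let e := Pi.basisFun F (Fin k)
  have hbasis : (List.ofFn fun i => ι F (Pi.single i (1 : F) : Fin k → F)).prod = ιMulti F k e := by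
    simp only [ιMulti_apply, e, Pi.basisFun_apply]
  have hwedge : (List.ofFn fun j : Fin k => ι F fun i : Fin k => a j ^ (i : ℕ)).prod =
      (∏ t : Fin k, ∏ s ∈ Iio t, (a t - a s)) • ιMulti F k e := by
    rw [← ιMulti_apply, (ιMulti F k).eq_basis_det_smul e, Pi.basisFun_det_apply,
      ← Matrix.det_vandermonde_eq_prod_Iio]
    rfl
  rw [hbasis]
  refine ⟨hwedge, fun ha => hwedge ▸ smul_ne_zero ?_ (ιMulti_basis_ne_zero e)⟩
  rw [← Matrix.det_vandermonde_eq_prod_Iio]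
  exact Matrix.det_vandermonde_ne_zero_iff.mpr ha

/-- The wedge product of `k` Vandermonde vectors equals the Vandermonde determinant
`∏_{s<t} (a t - a s)` times the wedge of the standard basis; in particular it is
nonzero when the `a j` are pairwise distinct. -/
theorem vandermonde_extensor_prod
    {F : Type} [Field F] (k : ℕ) (hk : 1 ≤ k) (a : Fin k → F) :
    (List.ofFn (fun j : Fin k =>
        ExteriorAlgebra.ι F (fun i : Fin k => a j ^ (i : ℕ)))).prod =
      (∏ t : Fin k, ∏ s ∈ Finset.Iio t, (a t - a s)) •
        (List.ofFn (fun i : Fin k =>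
          ExteriorAlgebra.ι F (Pi.single i (1 : F) : Fin k → F))).prod ∧
    (Function.Injective a →
      (List.ofFn (fun j : Fin k =>
        ExteriorAlgebra.ι F (fun i : Fin k => a j ^ (i : ℕ)))).prod ≠ 0) :=
  vandermonde_extensor_prod_general k a
end

section
/- Let F be a field, m ∈ ℕ, V a finite type, E : V → V → Prop a directed graph, k ≥ 1, and let ξ : V → Λ(F^m) be a map such that for every v ∈ V, ξ(v) is a product of a nonempty finite list of vectors ι(v_1)⋯ι(v_s) with s ≥ 1. Then the walk-sum equals the path-sum: Σ over all k-walks w of the ordered product ξ(w 0)·ξ(w 1)⋯ξ(w (k−1)) is equal to Σ over all k-paths w of ξ(w 0)·ξ(w 1)⋯ξ(w (k−1)). -/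
/-!
The product of the `ξ (w i)` along a walk is the wedge of the concatenation of the lists of
vectors defining them. If the walk revisits a vertex, a nonempty list occurs twice in that
concatenation, so some vector is repeated and the wedge vanishes; only paths contribute.
-/

open ExteriorAlgebra

theorem ExteriorAlgebra.list_prod_map_ι_eq_zero_of_not_nodup {R M : Type*} [CommRing R]
    [AddCommGroup M] [Module R M] {l : List M} (hl : ¬ l.Nodup) :
    (l.map (ι R)).prod = 0 := by
  obtain ⟨i, j, hij, hne⟩ : ∃ i j, l.get i = l.get j ∧ i ≠ j := by
    simpa [List.nodup_iff_injective_get, Function.Injective] using hl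
  rw [← List.ofFn_get l, List.map_ofFn]
  exact (ιMulti R _).map_eq_zero_of_eq _ hij hne

theorem List.injective_of_nodup_flatten_ofFn {α : Type*} {n : ℕ} {L : Fin n → List α}
    (hL : ∀ i, L i ≠ []) (h : (List.ofFn L).flatten.Nodup) : Function.Injective L := by
  intro i j hij
  by_contra hne
  obtain ⟨x, hx⟩ := List.exists_mem_of_ne_nil _ (hL i)
  have hdisj := (List.nodup_flatten.mp h).2
  rw [List.pairwise_ofFn] at hdisj
  rcases lt_or_gt_of_ne hne with hlt | hlt
  · exact hdisj hlt hx (hij ▸ hx)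
  · exact hdisj hlt (hij ▸ hx) hx

theorem ExteriorAlgebra.list_prod_ofFn_eq_zero_of_not_injective {R M : Type*} [CommRing R]
    [AddCommGroup M] [Module R M] {n : ℕ} {L : Fin n → List M} (hL : ∀ i, L i ≠ [])
    (h : ¬ Function.Injective L) :
    (List.ofFn fun i => ((L i).map (ι R)).prod).prod = 0 := by
  have hflatten : (List.ofFn fun i => ((L i).map (ι R)).prod).prod
      = ((List.ofFn L).flatten.map (ι R)).prod := by
    rw [List.map_flatten, List.prod_flatten, List.map_ofFn, List.map_ofFn]
    rfl
  rw [hflatten]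
  exact list_prod_map_ι_eq_zero_of_not_nodup
    fun hnd => h (List.injective_of_nodup_flatten_ofFn hL hnd)

theorem walk_sum_eq_path_sum_general
    {F : Type} [Field F] (m : ℕ) (V : Type) [Fintype V] [DecidableEq V]
    (E : V → V → Prop) [DecidableRel E] (k : ℕ)
    (ξ : V → ExteriorAlgebra F (Fin m → F))
    (hξ : ∀ v : V, ∃ l : List (Fin m → F), l ≠ [] ∧
      ξ v = (l.map (ExteriorAlgebra.ι F)).prod) :
    ∑ w ∈ Finset.univ.filter
        (fun w : Fin k → V =>
          ∀ i j : Fin k, (j : ℕ) = (i : ℕ) + 1 → E (w i) (w j)),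
      (List.ofFn (fun i => ξ (w i))).prod
    = ∑ w ∈ Finset.univ.filter
        (fun w : Fin k → V =>
          (∀ i j : Fin k, (j : ℕ) = (i : ℕ) + 1 → E (w i) (w j)) ∧
            Function.Injective w),
      (List.ofFn (fun i => ξ (w i))).prod := by
  choose L hL hLξ using hξ
  refine (Finset.sum_subset (Finset.monotone_filter_right _ fun _ _ => And.left) ?_).symm
  intro w hwalk hnotpath
  simp only [Finset.mem_filter, Finset.mem_univ, true_and] at hwalk hnotpath
  have hnotinj : ¬ Function.Injective (L ∘ w) :=
    fun hinj => hnotpath ⟨hwalk, hinj.of_comp⟩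
  simp only [hLξ]
  exact list_prod_ofFn_eq_zero_of_not_injective (fun i => hL (w i)) hnotinj

/-- If every vertex is assigned a decomposable extensor, the walk-sum over `k`-walks
equals the sum over `k`-paths (walks that are injective), since non-paths vanish. -/
theorem walk_sum_eq_path_sum
    {F : Type} [Field F] (m : ℕ) (V : Type) [Fintype V] [DecidableEq V]
    (E : V → V → Prop) [DecidableRel E] (k : ℕ) (hk : 1 ≤ k)
    (ξ : V → ExteriorAlgebra F (Fin m → F))
    (hξ : ∀ v : V, ∃ l : List (Fin m → F), l ≠ [] ∧
      ξ v = (l.map (ExteriorAlgebra.ι F)).prod) :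
    ∑ w ∈ Finset.univ.filter
        (fun w : Fin k → V =>
          ∀ i j : Fin k, (j : ℕ) = (i : ℕ) + 1 → E (w i) (w j)),
      (List.ofFn (fun i => ξ (w i))).prod
    = ∑ w ∈ Finset.univ.filter
        (fun w : Fin k → V =>
          (∀ i j : Fin k, (j : ℕ) = (i : ℕ) + 1 → E (w i) (w j)) ∧
            Function.Injective w),
      (List.ofFn (fun i => ξ (w i))).prod :=
  walk_sum_eq_path_sum_general m V E k ξ hξ
end

section
/- Let F be a field, k ∈ ℕ, x_1, …, x_k ∈ F^k, and let X : Matrix (Fin k) (Fin k) F be the matrix whose j-th column is x_j. In the exterior algebra Λ(F^k × F^k) of the 2k-dimensional space F^k × F^k, define the lifted blade x̄_j = ι(x_j, 0)·ι(0, x_j). Then x̄_1 · x̄_2 ⋯ x̄_k = (−1)^{k(k−1)/2} (det X)² • ( ι(e_1,0)⋯ι(e_k,0) · ι(0,e_1)⋯ι(0,e_k) ). -/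
/-!
Vectors anticommute in the exterior algebra, so moving every `ι(xⱼ,0)` in front of all the
`ι(0,xᵢ)` costs the sign `(-1)^(k choose 2)`. Each of the two remaining products is an
alternating function of `x`, hence `det X` times its value on the standard basis.
-/

open ExteriorAlgebra

theorem AlternatingMap.eq_basis_det_smulRight {R M N ι : Type*} [CommRing R] [AddCommGroup M]
    [Module R M] [AddCommGroup N] [Module R N] [Fintype ι] [DecidableEq ι]
    (e : Module.Basis ι R M) (f : M [⋀^ι]→ₗ[R] N) : f = e.det.smulRight (f e) := by
  refine e.ext_alternating fun i hi => ?_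
  let σ : Equiv.Perm ι := Equiv.ofBijective i (Finite.injective_iff_bijective.1 hi)
  change f (e ∘ σ) = e.det.smulRight (f e) (e ∘ σ)
  simp [AlternatingMap.map_perm, Module.Basis.det_self]

namespace ExteriorAlgebra

variable {R M N : Type*} [CommRing R] [AddCommGroup M] [Module R M] [AddCommGroup N] [Module R N]

theorem ι_mul_prod_ofFn_ι {n : ℕ} (v : M) (u : Fin n → M) :
    ι R v * (List.ofFn fun i => ι R (u i)).prod =
      (-1 : R) ^ n • ((List.ofFn fun i => ι R (u i)).prod * ι R v) := by
  induction n with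
  | zero => simp
  | succ n ih =>
    simp only [List.ofFn_succ, List.prod_cons]
    rw [← mul_assoc, eq_neg_of_add_eq_zero_left (ι_add_mul_swap v (u 0)), neg_mul, mul_assoc,
      ih, mul_smul_comm, pow_succ, mul_neg_one, neg_smul, mul_assoc]

theorem prod_ofFn_ι_mul_ι {n : ℕ} (u v : Fin n → M) :
    (List.ofFn fun i => ι R (u i) * ι R (v i)).prod =
      (-1 : R) ^ n.choose 2 •
        ((List.ofFn fun i => ι R (u i)).prod * (List.ofFn fun i => ι R (v i)).prod) := by
  induction n with
  | zero => simp
  | succ n ih =>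
    simp only [List.ofFn_succ, List.prod_cons]
    rw [ih, mul_smul_comm, mul_assoc (ι R (u 0)), ← mul_assoc (ι R (v 0)), ι_mul_prod_ofFn_ι,
      Nat.choose_succ_succ', Nat.choose_one_right, pow_add, mul_comm, mul_smul]
    simp only [smul_mul_assoc, mul_smul_comm, mul_assoc]

theorem prod_ofFn_ι_comp_eq_det_smul {n : ℕ} (e : Module.Basis (Fin n) R M) (g : M →ₗ[R] N)
    (v : Fin n → M) :
    (List.ofFn fun i => ι R (g (v i))).prod =
      e.det v • (List.ofFn fun i => ι R (g (e i))).prod := by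
  simpa [ιMulti_apply] using
    DFunLike.congr_fun (AlternatingMap.eq_basis_det_smulRight e ((ιMulti R n).compLinearMap g)) v

end ExteriorAlgebra

/-- The product of the lifted blades `x̄ⱼ = ι(xⱼ,0)·ι(0,xⱼ)` in `Λ(F^k × F^k)` equals
`(-1)^{k(k-1)/2} (det X)²` times the product of the lifted standard basis blades. -/
theorem lifted_blade_prod_eq_det_sq_smul
    {F : Type} [Field F] (k : ℕ) (x : Fin k → (Fin k → F))
    (X : Matrix (Fin k) (Fin k) F) (hX : ∀ i j, X i j = x j i) :
    (List.ofFn (fun j : Fin k =>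
        ExteriorAlgebra.ι F ((x j, 0) : (Fin k → F) × (Fin k → F)) *
          ExteriorAlgebra.ι F ((0, x j) : (Fin k → F) × (Fin k → F)))).prod =
      ((-1 : F) ^ (k * (k - 1) / 2) * X.det ^ 2) •
        ((List.ofFn (fun i : Fin k =>
            ExteriorAlgebra.ι F ((Pi.single i (1 : F), 0) :
              (Fin k → F) × (Fin k → F)))).prod *
          (List.ofFn (fun i : Fin k =>
            ExteriorAlgebra.ι F ((0, Pi.single i (1 : F)) :
              (Fin k → F) × (Fin k → F)))).prod) := by
  have hdet : (Pi.basisFun F (Fin k)).det x = X.det := by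
    rw [Pi.basisFun_det_apply, ← Matrix.det_transpose]
    congr
    ext i j
    simp [hX]
  have hfst := prod_ofFn_ι_comp_eq_det_smul (Pi.basisFun F (Fin k))
    (LinearMap.inl F (Fin k → F) (Fin k → F)) x
  have hsnd := prod_ofFn_ι_comp_eq_det_smul (Pi.basisFun F (Fin k))
    (LinearMap.inr F (Fin k → F) (Fin k → F)) x
  simp only [LinearMap.inl_apply, LinearMap.inr_apply, Pi.basisFun_apply, hdet] at hfst hsnd
  rw [prod_ofFn_ι_mul_ι, hfst, hsnd, smul_mul_smul_comm, smul_smul, Nat.choose_two_right, sq]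
end

section
/- Let F be a field, V a finite type, E : V → V → Prop a directed graph, k ≥ 1, and x : V → F^k a vertex coding. For v ∈ V define the lifted blade x̄(v) = ι(x v, 0)·ι(0, x v) in the exterior algebra Λ(F^k × F^k). For a k-walk w, let X_w : Matrix (Fin k) (Fin k) F be the matrix whose j-th column is x(w j). Then Σ over all k-walks w of x̄(w 0)·x̄(w 1)⋯x̄(w (k−1)) = (−1)^{k(k−1)/2} ( Σ over all k-paths w of (det X_w)² ) • ( ι(e_1,0)⋯ι(e_k,0) · ι(0,e_1)⋯ι(0,e_k) ). -/
/-!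
Both `v ↦ ι(v, 0)` and `v ↦ ι(0, v)` compose with `ιMulti` to alternating maps on `F^k`, so the
products `∏ ι(x(w j), 0)` and `∏ ι(0, x(w j))` are `det X_w` times the corresponding products of
basis vectors. Since `ι(0, u)` anticommutes with every `ι(v, 0)`, sorting the interleaved product
`∏ ι(x(w j), 0) ι(0, x(w j))` into the two blocks costs the sign `(-1)^(k choose 2)`. Each walk thus
contributes `± (det X_w)²` times a fixed blade, and the walks that are not paths repeat a column
of `X_w`, so they contribute nothing.
-/

theorem List.prod_mul_of_anticomm {A : Type*} [Ring A] (l : List A) (a : A)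
    (h : ∀ x ∈ l, x * a = -(a * x)) :
    l.prod * a = (-1 : ℤ) ^ l.length • (a * l.prod) := by
  induction l with
  | nil => simp
  | cons x t ih =>
    rw [List.forall_mem_cons] at h
    rw [List.prod_cons, mul_assoc, ih h.2, mul_smul_comm, ← mul_assoc, h.1, List.length_cons,
      pow_succ', mul_smul, neg_mul, smul_neg, neg_one_zsmul, mul_assoc]

theorem List.prod_ofFn_mul_of_anticomm {A : Type*} [Ring A] {k : ℕ} (a b : Fin k → A)
    (h : ∀ i j, b i * a j = -(a j * b i)) :
    (List.ofFn fun j => a j * b j).prod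
      = (-1 : ℤ) ^ k.choose 2 • ((List.ofFn a).prod * (List.ofFn b).prod) := by
  induction k with
  | zero => simp
  | succ n ih =>
    set A' := (List.ofFn fun i : Fin n => a i.castSucc).prod
    set B' := (List.ofFn fun i : Fin n => b i.castSucc).prod
    have hb : B' * a (Fin.last n) = (-1 : ℤ) ^ n • (a (Fin.last n) * B') := by
      simpa using List.prod_mul_of_anticomm _ (a (Fin.last n))
        (List.forall_mem_ofFn_iff.2 fun i => h _ _)
    simp only [List.ofFn_succ', List.concat_eq_append, List.prod_append, List.prod_cons,
      List.prod_nil, mul_one]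
    rw [ih _ _ fun i j => h _ _, smul_mul_assoc, mul_assoc A', ← mul_assoc B', hb,
      Nat.choose_succ_succ', Nat.choose_one_right, add_comm n, pow_add, mul_smul]
    simp only [smul_mul_assoc, mul_smul_comm, mul_assoc]
    rfl

theorem AlternatingMap.map_eq_basis_det_smul {R M N ι : Type*} [CommRing R] [AddCommGroup M]
    [Module R M] [AddCommGroup N] [Module R N] [Fintype ι] [DecidableEq ι]
    (e : Module.Basis ι R M) (f : M [⋀^ι]→ₗ[R] N) (v : ι → M) :
    f v = e.det v • f e := by
  suffices f = (LinearMap.toSpanSingleton R N (f e)).compAlternatingMap e.det from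
    congr($this v)
  refine Module.Basis.ext_alternating e fun i hi => ?_
  let σ : Equiv.Perm ι := Equiv.ofBijective i (Finite.injective_iff_bijective.1 hi)
  change f (e ∘ σ) = e.det (e ∘ σ) • f e
  rw [f.map_perm, e.det.map_perm, e.det_self, Units.smul_def, Units.smul_def, zsmul_one,
    Int.cast_smul_eq_zsmul]

namespace ExteriorAlgebra

variable {R M : Type*} [CommRing R] [AddCommGroup M] [Module R M]

variable (R) in
def liftedBlade (v : M) : ExteriorAlgebra R (M × M) :=
  ι R (v, 0) * ι R (0, v)

theorem ιMulti_comp_eq_basis_det_smul {N : Type*} [AddCommGroup N] [Module R N] {k : ℕ}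
    (e : Module.Basis (Fin k) R M) (L : M →ₗ[R] N) (v : Fin k → M) :
    ιMulti R k (L ∘ v) = e.det v • ιMulti R k (L ∘ e) :=
  AlternatingMap.map_eq_basis_det_smul e ((ιMulti R k).compLinearMap L) v

theorem prod_ofFn_liftedBlade {k : ℕ} (e : Module.Basis (Fin k) R M) (v : Fin k → M) :
    (List.ofFn fun j => liftedBlade R (v j)).prod
      = ((-1 : R) ^ k.choose 2 * e.det v ^ 2) •
          (ιMulti R k (LinearMap.inl R M M ∘ e) * ιMulti R k (LinearMap.inr R M M ∘ e)) := by
  have hanti (a b : M × M) : ι R a * ι R b = -(ι R b * ι R a) :=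
    eq_neg_of_add_eq_zero_left (ι_add_mul_swap a b)
  have hinl : (List.ofFn fun j => ι R (v j, 0)).prod
      = e.det v • ιMulti R k (LinearMap.inl R M M ∘ e) :=
    ιMulti_comp_eq_basis_det_smul e (LinearMap.inl R M M) v
  have hinr : (List.ofFn fun j => ι R (0, v j)).prod
      = e.det v • ιMulti R k (LinearMap.inr R M M ∘ e) :=
    ιMulti_comp_eq_basis_det_smul e (LinearMap.inr R M M) v
  simp only [liftedBlade]
  rw [List.prod_ofFn_mul_of_anticomm _ _ fun i j => hanti _ _, hinl, hinr,
    smul_mul_smul_comm, ← Int.cast_smul_eq_zsmul R, smul_smul, Int.cast_pow, Int.cast_neg,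
    Int.cast_one, sq]

end ExteriorAlgebra

theorem Matrix.det_of_comp_eq_zero_of_not_injective {R V n : Type*} [CommRing R] [Fintype n]
    [DecidableEq n] (x : V → n → R) {w : n → V} (hw : ¬ Function.Injective w) :
    (Matrix.of fun i j => x (w j) i).det = 0 := by
  obtain ⟨i, j, hij, hne⟩ := Function.not_injective_iff.1 hw
  exact Matrix.det_zero_of_column_eq hne fun m => by simp [hij]

theorem Finset.sum_filter_injective_det_sq {R V n : Type*} [CommRing R] [Fintype n]
    [DecidableEq n] [DecidableEq V] (s : Finset (n → V)) (x : V → n → R) :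
    ∑ w ∈ s.filter Function.Injective, (Matrix.of fun i j => x (w j) i).det ^ 2
      = ∑ w ∈ s, (Matrix.of fun i j => x (w j) i).det ^ 2 :=
  Finset.sum_filter_of_ne fun _ _ hw => by_contra fun hinj => hw <| by
    rw [Matrix.det_of_comp_eq_zero_of_not_injective x hinj, zero_pow two_ne_zero]

theorem lifted_walk_sum_eq_path_det_sq_sum_general
    {F : Type} [Field F] (V : Type) [Fintype V] [DecidableEq V]
    (E : V → V → Prop) [DecidableRel E] (k : ℕ)
    (x : V → (Fin k → F)) :
    ∑ w ∈ Finset.univ.filter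
        (fun w : Fin k → V =>
          ∀ i j : Fin k, (j : ℕ) = (i : ℕ) + 1 → E (w i) (w j)),
      (List.ofFn (fun j : Fin k =>
        ExteriorAlgebra.ι F ((x (w j), 0) : (Fin k → F) × (Fin k → F)) *
          ExteriorAlgebra.ι F ((0, x (w j)) : (Fin k → F) × (Fin k → F)))).prod
    = ((-1 : F) ^ (k * (k - 1) / 2) *
        ∑ w ∈ Finset.univ.filter
          (fun w : Fin k → V =>
            (∀ i j : Fin k, (j : ℕ) = (i : ℕ) + 1 → E (w i) (w j)) ∧
              Function.Injective w),
          (Matrix.det (Matrix.of fun i j : Fin k => x (w j) i)) ^ 2) •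
        ((List.ofFn (fun i : Fin k =>
            ExteriorAlgebra.ι F ((Pi.single i (1 : F), 0) :
              (Fin k → F) × (Fin k → F)))).prod *
          (List.ofFn (fun i : Fin k =>
            ExteriorAlgebra.ι F ((0, Pi.single i (1 : F)) :
              (Fin k → F) × (Fin k → F)))).prod) := by
  have hwalk (w : Fin k → V) :=
    ExteriorAlgebra.prod_ofFn_liftedBlade (Pi.basisFun F (Fin k)) (x ∘ w)
  have hdet (w : Fin k → V) :
      (Pi.basisFun F (Fin k)).det (x ∘ w) = (Matrix.of fun i j => x (w j) i).det := by
    rw [Pi.basisFun_det_apply, ← Matrix.det_transpose]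
    rfl
  simp only [ExteriorAlgebra.liftedBlade, ExteriorAlgebra.ιMulti_apply, Function.comp_apply,
    Pi.basisFun_apply, LinearMap.inl_apply, LinearMap.inr_apply, hdet,
    Nat.choose_two_right] at hwalk
  rw [Finset.sum_congr rfl fun w _ => hwalk w, ← Finset.sum_smul, ← Finset.mul_sum,
    ← Finset.filter_filter, Finset.sum_filter_injective_det_sq]

/-- The walk-sum of the lifted Bernoulli-style blades equals
`(-1)^{k(k-1)/2}` times the sum over `k`-paths of the squared determinants,
times the product of the lifted standard basis blades. -/
theorem lifted_walk_sum_eq_path_det_sq_sum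
    {F : Type} [Field F] (V : Type) [Fintype V] [DecidableEq V]
    (E : V → V → Prop) [DecidableRel E] (k : ℕ) (hk : 1 ≤ k)
    (x : V → (Fin k → F)) :
    ∑ w ∈ Finset.univ.filter
        (fun w : Fin k → V =>
          ∀ i j : Fin k, (j : ℕ) = (i : ℕ) + 1 → E (w i) (w j)),
      (List.ofFn (fun j : Fin k =>
        ExteriorAlgebra.ι F ((x (w j), 0) : (Fin k → F) × (Fin k → F)) *
          ExteriorAlgebra.ι F ((0, x (w j)) : (Fin k → F) × (Fin k → F)))).prod
    = ((-1 : F) ^ (k * (k - 1) / 2) *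
        ∑ w ∈ Finset.univ.filter
          (fun w : Fin k → V =>
            (∀ i j : Fin k, (j : ℕ) = (i : ℕ) + 1 → E (w i) (w j)) ∧
              Function.Injective w),
          (Matrix.det (Matrix.of fun i j : Fin k => x (w j) i)) ^ 2) •
        ((List.ofFn (fun i : Fin k =>
            ExteriorAlgebra.ι F ((Pi.single i (1 : F), 0) :
              (Fin k → F) × (Fin k → F)))).prod *
          (List.ofFn (fun i : Fin k =>
            ExteriorAlgebra.ι F ((0, Pi.single i (1 : F)) :
              (Fin k → F) × (Fin k → F)))).prod) :=
  lifted_walk_sum_eq_path_det_sq_sum_general V E k x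
end

section
/- Let (Ω, 𝒫) be a probability space, k ≥ 1, and (b_{ij})_{(i,j) ∈ Fin k × Fin k} an independent family of real-valued random variables such that each b_{ij} is square-integrable with E[b_{ij}] = 0 and E[b_{ij}²] = 1. Let B(ω) be the k×k real matrix with entries B(ω) i j = b_{ij}(ω). Then E[(det B)²] = k!. -/
/-!
Expanding both factors of `(det B)²` by the Leibniz formula writes it as a signed sum over pairs
of permutations `(σ, τ)` of monomials in which each entry `b_{ij}` occurs with exponent
`[i = σ j] + [i = τ j] ≤ 2`. By independence the expectation of a monomial is the product of the
moments of its entries. If `σ ≠ τ`, some entry occurs exactly once and its mean `0` kills the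
term; if `σ = τ`, every exponent is `0` or `2`, so the term is `sign σ ² = 1`. Hence the
expectation is the number `k!` of permutations.
-/

open MeasureTheory ProbabilityTheory Finset Equiv Perm

namespace Equiv.Perm

variable {n : Type*} [DecidableEq n]

def graphIndicator (σ : Perm n) (p : n × n) : ℕ := if σ p.2 = p.1 then 1 else 0

lemma graphIndicator_le_one (σ : Perm n) (p : n × n) : σ.graphIndicator p ≤ 1 := by
  unfold graphIndicator; split_ifs <;> simp

lemma prod_apply_eq_prod_pow_graphIndicator [Fintype n] {M : Type*} [CommMonoid M] (σ : Perm n)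
    (f : n × n → M) : ∏ j, f (σ j, j) = ∏ p, f p ^ σ.graphIndicator p := by
  rw [Fintype.prod_prod_type, prod_comm]
  refine prod_congr rfl fun j _ => ?_
  simp [graphIndicator, pow_ite, prod_ite_eq]

end Equiv.Perm

lemma Matrix.det_sq_eq_sum_prod_pow {n R : Type*} [Fintype n] [DecidableEq n] [CommRing R]
    (M : Matrix n n R) :
    M.det ^ 2 = ∑ σ : Perm n, ∑ τ : Perm n, (((sign σ * sign τ : ℤˣ) : ℤ) : R) *
      ∏ p : n × n, M p.1 p.2 ^ (σ.graphIndicator p + τ.graphIndicator p) := by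
  simp_rw [pow_add, prod_mul_distrib, ← prod_apply_eq_prod_pow_graphIndicator]
  rw [det_apply', sq, sum_mul_sum]
  refine sum_congr rfl fun σ _ => sum_congr rfl fun τ _ => ?_
  push_cast; ring

lemma ProbabilityTheory.iIndepFun.integrable_finset_prod {Ω ι : Type*} [MeasurableSpace Ω]
    {P : Measure Ω} {X : ι → Ω → ℝ} (hX : iIndepFun X P) (hint : ∀ i, Integrable (X i) P)
    (s : Finset ι) : Integrable (∏ i ∈ s, X i) P := by
  classical
  have := hX.isProbabilityMeasure
  induction s using Finset.cons_induction with
  | empty => exact integrable_const 1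
  | cons i s hi ih =>
    rw [prod_cons, mul_comm]
    exact (hX.indepFun_finsetProd_of_notMem₀ (fun j => (hint j).aemeasurable) hi).integrable_mul
      ih (hint i)

lemma MeasureTheory.MemLp.integrable_pow {Ω : Type*} [MeasurableSpace Ω] {P : Measure Ω}
    [IsFiniteMeasure P] {X : Ω → ℝ} (hX : MemLp X 2 P) {m : ℕ} (hm : m ≤ 2) :
    Integrable (fun ω => X ω ^ m) P := by
  interval_cases m
  · simp
  · simpa using hX.integrable one_le_two
  · exact hX.integrable_sq

section RandomMatrix

variable {Ω n : Type*} [MeasurableSpace Ω] {P : Measure Ω} [Fintype n] [DecidableEq n]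
  {b : n × n → Ω → ℝ}

lemma integrable_prod_pow_graphIndicator (hindep : iIndepFun b P) (hL2 : ∀ p, MemLp (b p) 2 P)
    (σ τ : Perm n) :
    Integrable (fun ω => ∏ p, b p ω ^ (σ.graphIndicator p + τ.graphIndicator p)) P := by
  have := hindep.isProbabilityMeasure
  have hle (p : n × n) : σ.graphIndicator p + τ.graphIndicator p ≤ 2 :=
    add_le_add (σ.graphIndicator_le_one p) (τ.graphIndicator_le_one p)
  simpa [prod_fn] using (hindep.comp _ fun p => measurable_id.pow_const
    (σ.graphIndicator p + τ.graphIndicator p)).integrable_finset_prod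
      (fun p => (hL2 p).integrable_pow (hle p)) univ

lemma integral_prod_pow_graphIndicator (hindep : iIndepFun b P) (hL2 : ∀ p, MemLp (b p) 2 P)
    (hmean : ∀ p, ∫ ω, b p ω ∂P = 0) (hvar : ∀ p, ∫ ω, b p ω ^ 2 ∂P = 1) (σ τ : Perm n) :
    ∫ ω, ∏ p, b p ω ^ (σ.graphIndicator p + τ.graphIndicator p) ∂P = if σ = τ then 1 else 0 := by
  have := hindep.isProbabilityMeasure
  rw [hindep.integral_fun_prod_comp (fun p => (hL2 p).aestronglyMeasurable.aemeasurable)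
    (fun p => (continuous_pow _).aestronglyMeasurable)]
  split_ifs with hστ
  · subst hστ
    refine prod_eq_one fun p _ => ?_
    unfold graphIndicator; split_ifs <;> simp [hvar]
  · obtain ⟨j, hj⟩ : ∃ j, σ j ≠ τ j := not_forall.mp fun h => hστ (Equiv.ext h)
    refine prod_eq_zero (mem_univ (σ j, j)) ?_
    simp [graphIndicator, Ne.symm hj, hmean]

end RandomMatrix

theorem expectation_det_sq_eq_factorial_general
    {Ω : Type} [MeasurableSpace Ω] (P : Measure Ω)
    (k : ℕ) (b : Fin k × Fin k → Ω → ℝ)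
    (hindep : iIndepFun b P)
    (hL2 : ∀ p, MemLp (b p) 2 P)
    (hmean : ∀ p, ∫ ω, b p ω ∂P = 0)
    (hvar : ∀ p, ∫ ω, (b p ω) ^ 2 ∂P = 1) :
    ∫ ω, (Matrix.det (Matrix.of fun i j : Fin k => b (i, j) ω)) ^ 2 ∂P
      = (Nat.factorial k : ℝ) := by
  have hintegrable (σ τ : Perm (Fin k)) := (integrable_prod_pow_graphIndicator hindep hL2 σ τ).const_mul
    (((sign σ * sign τ : ℤˣ) : ℤ) : ℝ)
  simp_rw [Matrix.det_sq_eq_sum_prod_pow, Matrix.of_apply]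
  rw [integral_finsetSum _ fun σ _ => integrable_finsetSum _ fun τ _ => hintegrable σ τ]
  simp_rw [integral_finsetSum _ fun τ _ => hintegrable _ τ, integral_const_mul,
    integral_prod_pow_graphIndicator hindep hL2 hmean hvar]
  simp only [mul_ite, mul_one, mul_zero, sum_ite_eq, mem_univ, if_true, Int.units_mul_self]
  simp [Fintype.card_perm]

/-- For a `k×k` random matrix with independent, mean-zero, variance-one,
square-integrable entries, the expectation of the squared determinant is `k!`. -/
theorem expectation_det_sq_eq_factorial
    {Ω : Type} [MeasurableSpace Ω] (P : Measure Ω) [IsProbabilityMeasure P]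
    (k : ℕ) (hk : 1 ≤ k) (b : Fin k × Fin k → Ω → ℝ)
    (hmeas : ∀ p, Measurable (b p))
    (hindep : iIndepFun b P)
    (hL2 : ∀ p, MemLp (b p) 2 P)
    (hmean : ∀ p, ∫ ω, b p ω ∂P = 0)
    (hvar : ∀ p, ∫ ω, (b p ω) ^ 2 ∂P = 1) :
    ∫ ω, (Matrix.det (Matrix.of fun i j : Fin k => b (i, j) ω)) ^ 2 ∂P
      = (Nat.factorial k : ℝ) :=
  expectation_det_sq_eq_factorial_general P k b hindep hL2 hmean hvar
end

section
/- Let μ₁ be the uniform probability measure on {−1, 1}, i.e. μ₁ = (1/2)·δ_{−1} + (1/2)·δ_1 on ℝ, and for k ≥ 1 let P be the product measure ⊗_{(i,j) ∈ Fin k × Fin k} μ₁ on the space of functions (Fin k × Fin k) → ℝ, viewed as k×k real matrices B (Bernoulli matrices). Then ∫ (det B)² dP(B) = k! and ∫ (det B)⁴ dP(B) ≤ (k!)² · k³. -/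
/-!
Expanding `det B ^ m` by the Leibniz formula gives a sum over `m`-tuples of permutations of signed
monomials in the entries, and a monomial in independent `±1` variables has expectation `1` if
every variable occurs to an even power and `0` otherwise. For `m = 2` the surviving tuples are
`(σ, σ)`, which gives `k!`. For `m = 4` a surviving tuple `(σ₀, σ₁, σ₂, σ₃)` is determined by `σ₀`
and the pair `α = σ₁σ₀⁻¹`, `β = σ₂σ₀⁻¹`, and `α`, `β` agree on the intersection of their supports.
Such a pair is determined by the restrictions of `α`, `α`, `β` to `S(α) ∩ S(β)`, `S(α) \ S(β)`,
`S(β) \ S(α)`, which are permutations of these sets; none of the three sets is a singleton, so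
their sizes take at most `k³` values, and for each choice `(u, v, w)` of sizes there are at most
`k! / (u! v! w! (k-u-v-w)!) · u! v! w! ≤ k!` pairs.
-/

open MeasureTheory Equiv Finset
open scoped ENNReal

noncomputable def rademacher : Measure ℝ :=
  ((1 : ℝ≥0∞) / 2) • Measure.dirac (-1 : ℝ) + ((1 : ℝ≥0∞) / 2) • Measure.dirac (1 : ℝ)

instance : IsProbabilityMeasure rademacher :=
  ⟨by simp [rademacher, ENNReal.inv_two_add_inv_two]⟩

lemma integrable_rademacher (f : ℝ → ℝ) : Integrable f rademacher :=
  ((integrable_dirac enorm_lt_top).smul_measure (by simp)).add_measure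
    ((integrable_dirac enorm_lt_top).smul_measure (by simp))

lemma integral_rademacher (f : ℝ → ℝ) : ∫ x, f x ∂rademacher = (f (-1) + f 1) / 2 := by
  rw [rademacher, integral_add_measure ((integrable_dirac enorm_lt_top).smul_measure (by simp))
    ((integrable_dirac enorm_lt_top).smul_measure (by simp)), integral_smul_measure,
    integral_smul_measure, integral_dirac, integral_dirac]
  simp only [ENNReal.toReal_div, ENNReal.toReal_one, ENNReal.toReal_ofNat, smul_eq_mul]
  ring

lemma integral_pow_rademacher (m : ℕ) :
    ∫ x, x ^ m ∂rademacher = if Even m then 1 else 0 := by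
  rw [integral_rademacher]
  rcases Nat.even_or_odd m with h | h <;> simp [h.neg_one_pow, h, Nat.not_even_iff_odd]

section Monomial

variable {ι : Type*} [Fintype ι]

lemma integrable_monomial_pi_rademacher (m : ι → ℕ) :
    Integrable (fun b : ι → ℝ => ∏ p, b p ^ m p) (Measure.pi fun _ => rademacher) :=
  Integrable.fintype_prod fun p => integrable_rademacher (· ^ m p)

lemma integral_monomial_pi_rademacher (m : ι → ℕ) :
    ∫ b, ∏ p, b p ^ m p ∂(Measure.pi fun _ => rademacher) =
      if ∀ p, Even (m p) then 1 else 0 := by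
  rw [integral_fintype_prod_eq_prod (fun p (x : ℝ) => x ^ m p)]
  simp only [integral_pow_rademacher, Fintype.prod_boole]

end Monomial

lemma Fintype.prod_comp_eq_prod_pow_card {ι κ M : Type*} [Fintype ι] [Fintype κ] [DecidableEq κ]
    [CommMonoid M] (f : κ → M) (g : ι → κ) :
    ∏ a, f (g a) = ∏ y, f y ^ #{a | g a = y} := by
  rw [← Finset.prod_fiberwise univ g (fun a => f (g a))]
  refine Finset.prod_congr rfl fun y _ => ?_
  rw [Finset.prod_congr rfl fun a ha => by rw [(mem_filter.1 ha).2], prod_const]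

section Balanced

variable {n : Type*} [DecidableEq n]

def IsBalanced {m : ℕ} (r : Fin m → Perm n) : Prop := ∀ x i, Even #{l | r l i = x}

lemma card_filter_apply_eq_castSucc {m : ℕ} (r : Fin (m + 1) → Perm n) (x i : n) :
    #{l | r l i = x} =
      #{l : Fin m | r l.castSucc i = x} + if r (Fin.last m) i = x then 1 else 0 := by
  simp only [card_filter, Fin.sum_univ_castSucc]

lemma IsBalanced.eq_of_castSucc {m : ℕ} {r r' : Fin (m + 1) → Perm n} (hr : IsBalanced r)
    (hr' : IsBalanced r') (h : ∀ l : Fin m, r l.castSucc = r' l.castSucc) : r = r' := by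
  refine funext (Fin.lastCases ?_ h)
  ext i
  have hodd := hr (r (Fin.last m) i) i
  have heven := hr' (r (Fin.last m) i) i
  rw [card_filter_apply_eq_castSucc, if_pos rfl, Nat.even_add_one] at hodd
  rw [card_filter_apply_eq_castSucc] at heven
  simp only [← h] at heven
  by_contra hne
  exact hodd (by simpa [Ne.symm hne] using heven)

lemma isBalanced_two_iff (r : Fin 2 → Perm n) : IsBalanced r ↔ r 0 = r 1 := by
  simp only [IsBalanced, card_filter, Fin.sum_univ_two]
  constructor
  · intro h
    ext i
    by_contra hne
    simpa [Ne.symm hne] using h (r 0 i) i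
  · intro h x i
    rw [h]
    exact ⟨_, rfl⟩

variable [Fintype n]

instance {m : ℕ} (r : Fin m → Perm n) : Decidable (IsBalanced r) :=
  inferInstanceAs (Decidable (∀ _ _, Even _))

lemma det_pow_eq_sum {R : Type*} [CommRing R] (b : n × n → R) (m : ℕ) :
    (Matrix.of fun i j => b (i, j)).det ^ m
      = ∑ r : Fin m → Perm n, (∏ l, (Perm.sign (r l) : R)) * ∏ p, b p ^ #{l | r l p.2 = p.1} := by
  rw [Matrix.det_apply', Fintype.sum_pow]
  refine sum_congr rfl fun r _ => ?_
  rw [prod_mul_distrib, prod_comm, Fintype.prod_prod_type_right]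
  exact congrArg _ (prod_congr rfl fun i _ =>
    Fintype.prod_comp_eq_prod_pow_card (fun x => b (x, i)) (r · i))

lemma integral_det_pow_pi_rademacher (m : ℕ) :
    ∫ b, (Matrix.of fun i j => b (i, j)).det ^ m ∂(Measure.pi fun _ : n × n => rademacher)
      = ∑ r : Fin m → Perm n, if IsBalanced r then ∏ l, (Perm.sign (r l) : ℝ) else 0 := by
  simp_rw [det_pow_eq_sum]
  rw [integral_finsetSum _ fun r _ => (integrable_monomial_pi_rademacher _).const_mul _]
  refine sum_congr rfl fun r _ => ?_
  rw [integral_const_mul, integral_monomial_pi_rademacher, mul_ite, mul_one, mul_zero]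
  exact if_congr (by simp [IsBalanced, Prod.forall]) rfl rfl

theorem integral_det_sq_pi_rademacher :
    ∫ b, (Matrix.of fun i j => b (i, j)).det ^ 2 ∂(Measure.pi fun _ : n × n => rademacher)
      = (Fintype.card n).factorial := by
  rw [integral_det_pow_pi_rademacher, ← (piFinTwoEquiv fun _ => Perm n).symm.sum_comp]
  have sign_sq (σ : Perm n) : (Perm.sign σ : ℝ) * Perm.sign σ = 1 := by
    rw [← Int.cast_mul, ← Units.val_mul, Int.units_mul_self, Units.val_one, Int.cast_one]
  simp [isBalanced_two_iff, Fintype.sum_prod_type, sign_sq, Fintype.card_perm]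

lemma prod_sign_le_one {ι : Type*} [Fintype ι] (σ : ι → Perm n) :
    ∏ l, (Perm.sign (σ l) : ℝ) ≤ 1 := by
  have h : ∏ l, (Perm.sign (σ l) : ℝ) = ((∏ l, Perm.sign (σ l) : ℤˣ) : ℤ) := by push_cast; rfl
  rcases Int.units_eq_one_or (∏ l, Perm.sign (σ l)) with h1 | h1 <;> simp [h, h1]

lemma integral_det_pow_pi_rademacher_le (m : ℕ) :
    ∫ b, (Matrix.of fun i j => b (i, j)).det ^ m ∂(Measure.pi fun _ : n × n => rademacher)
      ≤ #{r : Fin m → Perm n | IsBalanced r} := by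
  rw [integral_det_pow_pi_rademacher, card_filter, Nat.cast_sum]
  refine sum_le_sum fun r _ => ?_
  split_ifs
  · exact_mod_cast prod_sign_le_one r
  · simp

end Balanced

lemma Nat.descFactorial_mul_factorial_sub_le (a b : ℕ) :
    a.descFactorial b * (a - b).factorial ≤ a.factorial := by
  rcases le_or_gt b a with h | h
  · rw [mul_comm, Nat.factorial_mul_descFactorial h]
  · simp [Nat.descFactorial_eq_zero_iff_lt.2 h]

lemma Nat.choose_mul_choose_mul_choose_mul_factorial_le (k u v w : ℕ) :
    k.choose u * ((k - u).choose v * (k - u - v).choose w) *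
      (u.factorial * (v.factorial * w.factorial)) ≤ k.factorial := by
  have hD (a b : ℕ) : a.descFactorial b ≤ a.factorial :=
    (Nat.le_mul_of_pos_right _ (Nat.factorial_pos _)).trans (descFactorial_mul_factorial_sub_le a b)
  calc _ = k.descFactorial u * ((k - u).descFactorial v * (k - u - v).descFactorial w) := by
        simp only [Nat.descFactorial_eq_factorial_mul_choose]; ring
    _ ≤ k.descFactorial u * ((k - u).descFactorial v * (k - u - v).factorial) := by
        gcongr; exact hD _ _
    _ ≤ k.descFactorial u * (k - u).factorial := by
        gcongr; exact descFactorial_mul_factorial_sub_le _ _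
    _ ≤ k.factorial := descFactorial_mul_factorial_sub_le _ _

section DisjointTriples

variable {n : Type*} [DecidableEq n] [Fintype n]

variable (n) in
def disjointTriples (u v w : ℕ) : Finset (Finset n × Finset n × Finset n) :=
  {t | #t.1 = u ∧ #t.2.1 = v ∧ #t.2.2 = w ∧
    Disjoint t.1 t.2.1 ∧ Disjoint t.1 t.2.2 ∧ Disjoint t.2.1 t.2.2}

lemma card_disjointTriples_le (u v w : ℕ) :
    #(disjointTriples n u v w) ≤ (Fintype.card n).choose u * ((Fintype.card n - u).choose v *
          (Fintype.card n - u - v).choose w) := by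
  calc _ ≤ #((powersetCard u univ).biUnion fun U => (powersetCard v Uᶜ).biUnion fun V =>
        (powersetCard w (U ∪ V)ᶜ).image fun W => (U, V, W)) := by
        refine card_le_card fun t ht => ?_
        obtain ⟨hu, hv, hw, hUV, hUW, hVW⟩ := (mem_filter.1 ht).2
        simp only [mem_biUnion, mem_powersetCard, mem_image]
        exact ⟨t.1, ⟨subset_univ _, hu⟩, t.2.1, ⟨subset_compl_iff_disjoint_left.2 hUV, hv⟩, t.2.2,
          ⟨subset_compl_iff_disjoint_left.2 (disjoint_union_left.2 ⟨hUW, hVW⟩), hw⟩, rfl⟩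
    _ ≤ #(powersetCard u (univ : Finset n)) * ((Fintype.card n - u).choose v *
          (Fintype.card n - u - v).choose w) := by
        refine card_biUnion_le_card_mul _ _ _ fun U hU => ?_
        rw [mem_powersetCard] at hU
        refine (card_biUnion_le_card_mul _ _ ((Fintype.card n - u - v).choose w)
          fun V hV => ?_).trans_eq (by rw [card_powersetCard, card_compl, hU.2])
        rw [mem_powersetCard] at hV
        refine card_image_le.trans_eq ?_
        have hUV := card_union_of_disjoint (subset_compl_iff_disjoint_right.1 hV.1).symm
        rw [card_powersetCard, card_compl, hUV, hU.2, hV.2, Nat.sub_sub]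
    _ = _ := by rw [card_powersetCard, card_univ]

end DisjointTriples

namespace Equiv.Perm

lemma apply_mem_iff_of_mapsTo {n : Type*} {σ : Perm n} {s : Finset n} (h : ∀ x ∈ s, σ x ∈ s)
    (x : n) : σ x ∈ s ↔ x ∈ s := by
  have hs : s.map σ.toEmbedding = s :=
    map_eq_of_subset fun _ hz => by
      obtain ⟨y, hy, rfl⟩ := mem_map.1 hz
      exact h y hy
  nth_rw 1 [← hs]
  exact mem_map' σ.toEmbedding

variable {n : Type*} [DecidableEq n] [Fintype n]

lemma card_ne_one_of_mapsTo {σ : Perm n} {s : Finset n} (hs : s ⊆ σ.support)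
    (h : ∀ x ∈ s, σ x ∈ s) : #s ≠ 1 := by
  intro hcard
  obtain ⟨a, rfl⟩ := card_eq_one.1 hcard
  exact mem_support.1 (hs (mem_singleton_self a)) (mem_singleton.1 (h a (mem_singleton_self a)))

lemma eq_of_eqOn_of_support_subset {σ τ : Perm n} {s : Finset n}
    (hσ : σ.support ⊆ s) (hτ : τ.support ⊆ s) (h : ∀ x ∈ s, σ x = τ x) : σ = τ := by
  ext x
  by_cases hx : x ∈ s
  · exact h x hx
  · rw [notMem_support.1 (fun hx' => hx (hσ hx')), notMem_support.1 (fun hx' => hx (hτ hx'))]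

def AgreeOnCommonSupport (α β : Perm n) : Prop := ∀ x ∈ α.support ∩ β.support, α x = β x

instance (α β : Perm n) : Decidable (AgreeOnCommonSupport α β) :=
  inferInstanceAs (Decidable (∀ x ∈ α.support ∩ β.support, α x = β x))

namespace AgreeOnCommonSupport

variable {α β : Perm n}

lemma symm (h : AgreeOnCommonSupport α β) : AgreeOnCommonSupport β α := fun x hx =>
  (h x (by rwa [inter_comm])).symm

lemma apply_mem_inter_iff (h : AgreeOnCommonSupport α β) (x : n) :
    α x ∈ α.support ∩ β.support ↔ x ∈ α.support ∩ β.support :=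
  apply_mem_iff_of_mapsTo (fun y hy => mem_inter.2
    ⟨apply_mem_support.2 (mem_inter.1 hy).1, h y hy ▸ apply_mem_support.2 (mem_inter.1 hy).2⟩) x

lemma apply_mem_sdiff_iff (h : AgreeOnCommonSupport α β) (x : n) :
    α x ∈ α.support \ β.support ↔ x ∈ α.support \ β.support :=
  apply_mem_iff_of_mapsTo (fun y hy => by
    obtain ⟨hyα, hyβ⟩ := mem_sdiff.1 hy
    refine mem_sdiff.2 ⟨apply_mem_support.2 hyα, fun hαy => hyβ ?_⟩
    have hαy' : α y ∈ α.support ∩ β.support := mem_inter.2 ⟨apply_mem_support.2 hyα, hαy⟩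
    exact (mem_inter.1 ((h.apply_mem_inter_iff y).1 hαy')).2) x

lemma card_parts_ne_one (h : AgreeOnCommonSupport α β) :
    #(α.support ∩ β.support) ≠ 1 ∧ #(α.support \ β.support) ≠ 1 ∧ #(β.support \ α.support) ≠ 1 :=
  ⟨card_ne_one_of_mapsTo inter_subset_left fun x => (h.apply_mem_inter_iff x).2,
    card_ne_one_of_mapsTo sdiff_subset fun x => (h.apply_mem_sdiff_iff x).2,
    card_ne_one_of_mapsTo sdiff_subset fun x => (h.symm.apply_mem_sdiff_iff x).2⟩

end AgreeOnCommonSupport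

def supportParts (q : Perm n × Perm n) : Finset n × Finset n × Finset n :=
  (q.1.support ∩ q.2.support, q.1.support \ q.2.support, q.2.support \ q.1.support)

lemma card_filter_supportParts_eq_le (t : Finset n × Finset n × Finset n) :
    #{q : Perm n × Perm n | AgreeOnCommonSupport q.1 q.2 ∧ supportParts q = t}
      ≤ (#t.1).factorial * ((#t.2.1).factorial * (#t.2.2).factorial) := by
  obtain ⟨U, V, W⟩ := t
  set F := ({q : Perm n × Perm n | AgreeOnCommonSupport q.1 q.2 ∧ supportParts q = (U, V, W)} :
    Finset _)
  have hF (q : F) : AgreeOnCommonSupport q.1.1 q.1.2 ∧ q.1.1.support ∩ q.1.2.support = U ∧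
      q.1.1.support \ q.1.2.support = V ∧ q.1.2.support \ q.1.1.support = W := by
    simpa [F, supportParts] using q.2
  let restrict (q : F) : Perm U × Perm V × Perm W :=
    (q.1.1.subtypePerm fun x => by rw [← (hF q).2.1]; exact (hF q).1.apply_mem_inter_iff x,
      q.1.1.subtypePerm fun x => by rw [← (hF q).2.2.1]; exact (hF q).1.apply_mem_sdiff_iff x,
      q.1.2.subtypePerm fun x => by rw [← (hF q).2.2.2]; exact (hF q).1.symm.apply_mem_sdiff_iff x)
  have restrict_injective : Function.Injective restrict := by
    intro q q' hqq'
    obtain ⟨h, hU, hV, hW⟩ := hF q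
    obtain ⟨h', hU', hV', hW'⟩ := hF q'
    simp only [restrict, Prod.ext_iff, Perm.ext_iff, Subtype.ext_iff, subtypePerm_apply,
      Subtype.forall] at hqq'
    obtain ⟨onU, onV, onW⟩ := hqq'
    have parts (σ τ : Perm n) : σ.support = σ.support ∩ τ.support ∪ σ.support \ τ.support :=
      (sup_inf_sdiff _ _).symm
    have hα : q.1.1.support = U ∪ V := by rw [parts _ q.1.2, hU, hV]
    have hβ : q.1.2.support = U ∪ W := by rw [parts _ q.1.1, inter_comm, hU, hW]
    have hα' : q'.1.1.support = U ∪ V := by rw [parts _ q'.1.2, hU', hV']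
    have hβ' : q'.1.2.support = U ∪ W := by rw [parts _ q'.1.1, inter_comm, hU', hW']
    have eqα : q.1.1 = q'.1.1 := eq_of_eqOn_of_support_subset hα.subset hα'.subset fun x hx =>
      (mem_union.1 hx).elim (onU x) (onV x)
    refine Subtype.ext (Prod.ext eqα (eq_of_eqOn_of_support_subset hβ.subset hβ'.subset
      fun x hx => (mem_union.1 hx).elim (fun hxU => ?_) (onW x)))
    rw [← h x (hU ▸ hxU), ← h' x (hU' ▸ hxU), eqα]
  calc #F = Fintype.card F := (Fintype.card_coe F).symm
    _ ≤ Fintype.card (Perm U × Perm V × Perm W) := Fintype.card_le_of_injective _ restrict_injective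
    _ = _ := by simp only [Fintype.card_prod, Fintype.card_perm, Fintype.card_coe]

def partSizes (q : Perm n × Perm n) : ℕ × ℕ × ℕ :=
  (#(supportParts q).1, #(supportParts q).2.1, #(supportParts q).2.2)

lemma card_filter_partSizes_eq_le (s : ℕ × ℕ × ℕ) :
    #{q : Perm n × Perm n | AgreeOnCommonSupport q.1 q.2 ∧ partSizes q = s}
      ≤ (Fintype.card n).factorial := by
  obtain ⟨u, v, w⟩ := s
  set C : Finset (Perm n × Perm n) :=
    {q | AgreeOnCommonSupport q.1 q.2 ∧ partSizes q = (u, v, w)}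
  set T := disjointTriples n u v w
  have hmaps : ∀ q ∈ C, supportParts q ∈ T := by
    intro q hq
    simp only [C, mem_filter, mem_univ, true_and, partSizes, Prod.mk.injEq] at hq
    obtain ⟨-, hu, hv, hw⟩ := hq
    simp only [T, disjointTriples, mem_filter, mem_univ, true_and]
    exact ⟨hu, hv, hw, (disjoint_sdiff_inter _ _).symm, disjoint_sdiff.mono_left inter_subset_left,
      disjoint_sdiff.mono_left sdiff_subset⟩
  calc #C = ∑ t ∈ T, #{q ∈ C | supportParts q = t} := card_eq_sum_card_fiberwise hmaps
    _ ≤ ∑ t ∈ T, u.factorial * (v.factorial * w.factorial) := by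
        refine sum_le_sum fun t ht => ?_
        obtain ⟨hu, hv, hw, -⟩ := (mem_filter.1 ht).2
        refine (card_le_card fun q hq => ?_).trans (hu ▸ hv ▸ hw ▸ card_filter_supportParts_eq_le t)
        simp only [C, mem_filter, mem_univ, true_and] at hq ⊢
        exact ⟨hq.1.1, hq.2⟩
    _ = #T * (u.factorial * (v.factorial * w.factorial)) := by rw [sum_const, smul_eq_mul]
    _ ≤ _ := (Nat.mul_le_mul_right _ (card_disjointTriples_le u v w)).trans
        (Nat.choose_mul_choose_mul_choose_mul_factorial_le _ _ _ _)

theorem card_agreeOnCommonSupport_le [Nonempty n] :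
    #{q : Perm n × Perm n | AgreeOnCommonSupport q.1 q.2}
      ≤ (Fintype.card n).factorial * Fintype.card n ^ 3 := by
  set k := Fintype.card n
  set S := (Finset.range (k + 1)).erase 1
  have hS : #S = k := by
    rw [card_erase_of_mem (mem_range.2 (by have := Fintype.card_pos (α := n); omega)), card_range]
    rfl
  set A : Finset (Perm n × Perm n) := {q | AgreeOnCommonSupport q.1 q.2}
  have hmaps : ∀ q ∈ A, partSizes q ∈ S ×ˢ S ×ˢ S := by
    intro q hq
    have mem_S (s : Finset n) (hs : #s ≠ 1) : #s ∈ S :=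
      Finset.mem_erase.2 ⟨hs, Finset.mem_range.2 (Nat.lt_succ_of_le (card_le_univ s))⟩
    obtain ⟨h1, h2, h3⟩ := (mem_filter.1 hq).2.card_parts_ne_one
    exact Finset.mem_product.2 ⟨mem_S _ h1, Finset.mem_product.2 ⟨mem_S _ h2, mem_S _ h3⟩⟩
  calc #A = ∑ s ∈ S ×ˢ S ×ˢ S, #{q ∈ A | partSizes q = s} := card_eq_sum_card_fiberwise hmaps
    _ ≤ ∑ _s ∈ S ×ˢ S ×ˢ S, k.factorial := sum_le_sum fun s _ => by
        rw [filter_filter]; exact card_filter_partSizes_eq_le s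
    _ = k.factorial * k ^ 3 := by rw [sum_const, card_product, card_product, hS, smul_eq_mul]; ring

end Equiv.Perm

section FourthMoment

variable {n : Type*} [DecidableEq n] [Fintype n]

lemma IsBalanced.agreeOnCommonSupport {r : Fin 4 → Perm n} (hr : IsBalanced r) :
    (r 1 * (r 0)⁻¹).AgreeOnCommonSupport (r 2 * (r 0)⁻¹) := by
  intro x hx
  obtain ⟨i, rfl⟩ := (r 0).surjective x
  simp only [mem_inter, Perm.mem_support, Perm.mul_apply, Perm.coe_inv, symm_apply_apply] at hx ⊢
  obtain ⟨h1, h2⟩ := hx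
  -- `r 0 i` must occur again among the entries of column `i`, which forces `r 3 i = r 0 i`;
  -- then only `r 2 i` is left to pair with `r 1 i`.
  have count (x : n) := hr x i
  simp only [card_filter, Fin.sum_univ_four] at count
  have h3 : r 3 i = r 0 i := by
    by_contra h3
    have := count (r 0 i)
    rw [if_pos rfl, if_neg h1, if_neg h2, if_neg h3] at this
    exact absurd this (by decide)
  by_contra h12
  have := count (r 1 i)
  rw [if_neg (Ne.symm h1), if_pos rfl, if_neg (Ne.symm h12), h3, if_neg (Ne.symm h1)] at this
  exact absurd this (by decide)

lemma card_isBalanced_four_le :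
    #{r : Fin 4 → Perm n | IsBalanced r}
      ≤ (Fintype.card n).factorial * #{q : Perm n × Perm n | q.1.AgreeOnCommonSupport q.2} := by
  rw [← Fintype.card_perm, ← card_univ, ← card_product]
  refine card_le_card_of_injOn (fun r => (r 0, r 1 * (r 0)⁻¹, r 2 * (r 0)⁻¹)) ?_ ?_
  · intro r hr
    simp only [mem_coe, mem_product, mem_univ, true_and, mem_filter] at hr ⊢
    exact hr.agreeOnCommonSupport
  · intro r hr r' hr' h
    simp only [mem_coe, mem_filter, mem_univ, true_and] at hr hr'
    simp only [Prod.mk.injEq] at h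
    obtain ⟨h0, h1, h2⟩ := h
    rw [h0, mul_left_inj] at h1 h2
    refine hr.eq_of_castSucc hr' fun l => ?_
    fin_cases l
    exacts [h0, h1, h2]

theorem integral_det_pow_four_pi_rademacher_le [Nonempty n] :
    ∫ b, (Matrix.of fun i j => b (i, j)).det ^ 4 ∂(Measure.pi fun _ : n × n => rademacher)
      ≤ ((Fintype.card n).factorial : ℝ) ^ 2 * (Fintype.card n : ℝ) ^ 3 := by
  calc _ ≤ (#{r : Fin 4 → Perm n | IsBalanced r} : ℝ) := integral_det_pow_pi_rademacher_le 4
    _ ≤ (((Fintype.card n).factorial * ((Fintype.card n).factorial * Fintype.card n ^ 3) : ℕ)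
          : ℝ) :=
        Nat.cast_le.2 (card_isBalanced_four_le.trans
          (Nat.mul_le_mul_left _ Perm.card_agreeOnCommonSupport_le))
    _ = _ := by push_cast; ring

end FourthMoment

/-- For a `k×k` Bernoulli matrix (i.i.d. uniform `±1` entries),
the second moment of the determinant is `k!` and the fourth moment
is at most `(k!)² k³`. -/
theorem moments_det_bernoulli_matrix
    (k : ℕ) (hk : 1 ≤ k)
    (μ₁ : Measure ℝ)
    (hμ₁ : μ₁ = ((1 : ℝ≥0∞) / 2) • Measure.dirac (-1 : ℝ) +
      ((1 : ℝ≥0∞) / 2) • Measure.dirac (1 : ℝ))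
    (P : Measure ((Fin k × Fin k) → ℝ))
    (hP : P = Measure.pi (fun _ : Fin k × Fin k => μ₁)) :
    (∫ b, (Matrix.det (Matrix.of fun i j : Fin k => b (i, j))) ^ 2 ∂P
        = (Nat.factorial k : ℝ)) ∧
    (∫ b, (Matrix.det (Matrix.of fun i j : Fin k => b (i, j))) ^ 4 ∂P
        ≤ (Nat.factorial k : ℝ) ^ 2 * (k : ℝ) ^ 3) := by
  have : Nonempty (Fin k) := ⟨⟨0, hk⟩⟩
  obtain rfl : μ₁ = rademacher := hμ₁
  subst hP
  simpa only [Fintype.card_fin] using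
    And.intro (integral_det_sq_pi_rademacher (n := Fin k))
      (integral_det_pow_four_pi_rademacher_le (n := Fin k))
end

section
/- Let F be a field of characteristic 2 and k ∈ ℕ. Let A = MonoidAlgebra F (Multiplicative (Fin k → ZMod 2)) be the group algebra of the group ℤ₂^k over F, and for i ∈ Fin k let g_i ∈ A be the group element corresponding to the i-th standard generator (the function sending i to 1 and all other indices to 0). Then: (a) the F-linear map f : (Fin k → F) → A defined by f(v) = Σ_i v_i · (1 + g_i) satisfies f(v) · f(v) = 0 for all v; and (b) the F-algebra homomorphism Λ(F^k) → A induced by f via the universal property of the exterior algebra (ExteriorAlgebra.lift) is bijective. In particular, Λ(F^k) and the group algebra F[ℤ₂^k] are isomorphic as F-algebras. -/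
/-!
In characteristic two the group algebra is commutative with `(1 + gᵢ)² = 1 + gᵢ² = 0`, so
`f v * f v = ∑ i, (v i)² • (1 + gᵢ)² = 0`. The image of the induced homomorphism contains
`1 + (1 + gᵢ) = gᵢ`, and the `gᵢ` generate the group algebra, so it is surjective. Both algebras
have dimension `2 ^ k` (the exterior algebra has the basis of monomials indexed by subsets of
`Fin k`), hence the surjection is bijective.
-/

open ExteriorAlgebra MonoidAlgebra

theorem CharTwo.one_add_mul_self_eq_zero {A : Type*} [CommRing A] [CharP A 2] {g : A}
    (hg : g * g = 1) : (1 + g) * (1 + g) = 0 := by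
  rw [CharTwo.add_mul_self, one_mul, hg, CharTwo.add_self_eq_zero]

theorem CharTwo.sum_smul_one_add_mul_self_eq_zero {R A ι : Type*} [CommSemiring R] [CommRing A]
    [CharP A 2] [Algebra R A] {g : ι → A} (hg : ∀ i, g i * g i = 1) (s : Finset ι) (c : ι → R) :
    (∑ i ∈ s, c i • (1 + g i)) * (∑ i ∈ s, c i • (1 + g i)) = 0 := by
  rw [CharTwo.sum_mul_self]
  refine Finset.sum_eq_zero fun i _ => ?_
  rw [smul_mul_smul_comm, CharTwo.one_add_mul_self_eq_zero (hg i), smul_zero]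

theorem ExteriorAlgebra.finrank_eq_two_pow {R M I : Type*} [CommRing R] [StrongRankCondition R]
    [AddCommGroup M] [Module R M] [LinearOrder I] [Fintype I] (b : Module.Basis I R M) :
    Module.finrank R (ExteriorAlgebra R M) = 2 ^ Fintype.card I := by
  rw [Module.finrank_eq_card_basis b.ExteriorAlgebra, Fintype.card_finset]

theorem ofAdd_eq_prod_pow_ofAdd_single {ι : Type*} [Fintype ι] [DecidableEq ι] {n : ℕ} [NeZero n]
    (x : ι → ZMod n) :
    Multiplicative.ofAdd x = ∏ i, Multiplicative.ofAdd (Pi.single i (1 : ZMod n)) ^ (x i).val := by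
  simp_rw [← ofAdd_nsmul, ← ofAdd_sum, ← Pi.single_smul, nsmul_one, ZMod.natCast_zmod_val,
    Finset.univ_sum_single]

theorem MonoidAlgebra.adjoin_range_of_ofAdd_single_eq_top (R : Type*) [CommSemiring R]
    {ι : Type*} [Fintype ι] [DecidableEq ι] (n : ℕ) [NeZero n] :
    Algebra.adjoin R (Set.range fun i : ι =>
      of R (Multiplicative (ι → ZMod n)) (Multiplicative.ofAdd (Pi.single i 1))) = ⊤ := by
  refine Algebra.eq_top_iff.2 fun a => ?_
  induction a using MonoidAlgebra.induction_on with
  | of x =>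
    rw [← ofAdd_toAdd x, ofAdd_eq_prod_pow_ofAdd_single, map_prod]
    refine Subalgebra.prod_mem _ fun i _ => ?_
    rw [map_pow]
    exact pow_mem (Algebra.subset_adjoin (Set.mem_range_self i)) _
  | add a b ha hb => exact add_mem ha hb
  | smul r a ha => exact Subalgebra.smul_mem _ ha r

/-- Over a field of characteristic two, the exterior algebra `Λ(F^k)` is isomorphic
to the group algebra `F[ℤ₂^k]`: the linear map `v ↦ ∑ i, v i • (1 + gᵢ)` squares to
zero pointwise, and the induced algebra homomorphism is bijective. -/
theorem exteriorAlgebra_iso_groupAlgebra_char_two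
    {F : Type} [Field F] [CharP F 2] (k : ℕ)
    (g : Fin k → MonoidAlgebra F (Multiplicative (Fin k → ZMod 2)))
    (hg : ∀ i, g i = MonoidAlgebra.of F (Multiplicative (Fin k → ZMod 2))
      (Multiplicative.ofAdd (Pi.single i (1 : ZMod 2))))
    (f : (Fin k → F) →ₗ[F] MonoidAlgebra F (Multiplicative (Fin k → ZMod 2)))
    (hf : ∀ v, f v = ∑ i : Fin k, v i • (1 + g i)) :
    (∀ v, f v * f v = 0) ∧
    ∀ (hsq : ∀ v, f v * f v = 0),
      Function.Bijective (ExteriorAlgebra.lift F ⟨f, hsq⟩) := by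
  have : CharP (MonoidAlgebra F (Multiplicative (Fin k → ZMod 2))) 2 :=
    charP_of_injective_algebraMap' F 2
  have hgg (i : Fin k) : g i * g i = 1 := by
    rw [hg, ← map_mul, ← ofAdd_add, ← Pi.single_add, CharTwo.add_self_eq_zero, Pi.single_zero,
      ofAdd_zero, map_one]
  refine ⟨fun v => hf v ▸ CharTwo.sum_smul_one_add_mul_self_eq_zero hgg _ _, fun hsq => ?_⟩
  have hι (i : Fin k) : lift F ⟨f, hsq⟩ (1 + ι F (Pi.single i 1)) = g i := by
    simp only [map_add, map_one, lift_ι_apply, hf, Pi.single_apply, ite_smul,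
      one_smul, zero_smul, Finset.sum_ite_eq', Finset.mem_univ, if_true, CharTwo.add_cancel_left]
  have hsurj : Function.Surjective (lift F ⟨f, hsq⟩) := by
    rw [← AlgHom.range_eq_top, eq_top_iff, ← adjoin_range_of_ofAdd_single_eq_top F 2,
      Algebra.adjoin_le_iff]
    rintro _ ⟨i, rfl⟩
    exact ⟨_, (hι i).trans (hg i)⟩
  have : Module.Finite F (ExteriorAlgebra F (Fin k → F)) :=
    .of_basis (Pi.basisFun F (Fin k)).ExteriorAlgebra
  have hdim : Module.finrank F (ExteriorAlgebra F (Fin k → F)) =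
      Module.finrank F (MonoidAlgebra F (Multiplicative (Fin k → ZMod 2))) := by
    rw [finrank_eq_two_pow (Pi.basisFun F (Fin k)),
      Module.finrank_eq_card_basis (MonoidAlgebra.basis _ F)]
    simp
  exact ⟨(LinearMap.injective_iff_surjective_of_finrank_eq_finrank hdim
    (f := (lift F ⟨f, hsq⟩).toLinearMap)).2 hsurj, hsurj⟩
end

section
/- Let V be a type, k ≥ 2 a natural number, and let p, q : Fin k → V be injective functions. If the set of consecutive ordered pairs of p equals that of q, i.e. { (p i, p (i+1)) : i ∈ ℕ, i + 1 < k } = { (q i, q (i+1)) : i ∈ ℕ, i + 1 < k } as subsets of V × V, then p = q. (A directed path on at least two vertices is uniquely determined by its set of directed edges.) -/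
/-!
Since `q` is injective, the only consecutive pair of `q` leaving `q j` is `(q j, q (j + 1))`.
Hence a walk `p` all of whose steps are consecutive pairs of `q` follows `q` from wherever it
starts: `p i = q (j₀ + i)`. As `p` has as many vertices as `q`, the offset `j₀` must be `0`.
-/

open Function

section ConsecutivePairs

variable {V : Type*} {k : ℕ}

def consecutivePairs (p : Fin k → V) : Set (V × V) :=
  {x | ∃ (i : ℕ) (h : i + 1 < k), x = (p ⟨i, Nat.lt_of_succ_lt h⟩, p ⟨i + 1, h⟩)}

lemma mk_mem_consecutivePairs (p : Fin k → V) {i : ℕ} (h : i + 1 < k) :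
    (p ⟨i, Nat.lt_of_succ_lt h⟩, p ⟨i + 1, h⟩) ∈ consecutivePairs p :=
  ⟨i, h, rfl⟩

lemma Function.Injective.exists_succ_of_mem_consecutivePairs {q : Fin k → V}
    (hq : Injective q) {j : ℕ} (hj : j < k) {b : V} (h : (q ⟨j, hj⟩, b) ∈ consecutivePairs q) :
    ∃ h' : j + 1 < k, b = q ⟨j + 1, h'⟩ := by
  obtain ⟨j', hj', he⟩ := h
  obtain ⟨ha, rfl⟩ := Prod.ext_iff.mp he
  obtain rfl : j = j' := Fin.mk.inj (hq ha)
  exact ⟨hj', rfl⟩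

lemma eq_comp_add_of_consecutivePairs_subset {p q : Fin k → V} (hq : Injective q)
    (hpq : consecutivePairs p ⊆ consecutivePairs q) {j₀ : ℕ} (hj₀ : j₀ < k)
    (h₀ : p ⟨0, Nat.zero_lt_of_lt hj₀⟩ = q ⟨j₀, hj₀⟩) :
    ∀ i (hi : i < k), ∃ h : j₀ + i < k, p ⟨i, hi⟩ = q ⟨j₀ + i, h⟩
  | 0, _ => ⟨hj₀, h₀⟩
  | i + 1, hi => by
    obtain ⟨h, hpi⟩ := eq_comp_add_of_consecutivePairs_subset hq hpq hj₀ h₀ i (by omega)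
    have hstep := hpq (mk_mem_consecutivePairs p hi)
    rw [hpi] at hstep
    exact hq.exists_succ_of_mem_consecutivePairs h hstep

end ConsecutivePairs

theorem path_eq_of_edgeSet_eq_general
    {V : Type} (k : ℕ) (hk : 2 ≤ k) (p q : Fin k → V)
    (hq : Function.Injective q)
    (hedges :
      {x : V × V | ∃ (i : ℕ) (h : i + 1 < k),
          x = (p ⟨i, Nat.lt_of_succ_lt h⟩, p ⟨i + 1, h⟩)} =
      {x : V × V | ∃ (i : ℕ) (h : i + 1 < k),
          x = (q ⟨i, Nat.lt_of_succ_lt h⟩, q ⟨i + 1, h⟩)}) :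
    p = q := by
  have hpq : consecutivePairs p ⊆ consecutivePairs q := hedges.le
  obtain ⟨j₀, hj₀, h₀⟩ := hpq (mk_mem_consecutivePairs p (i := 0) (by omega))
  have hshift := eq_comp_add_of_consecutivePairs_subset hq hpq (Nat.lt_of_succ_lt hj₀)
    (congrArg Prod.fst h₀)
  obtain ⟨hlast, -⟩ := hshift (k - 1) (by omega)
  obtain rfl : j₀ = 0 := by omega
  funext i
  simpa using (hshift i i.2).2

/-- A directed path on `k ≥ 2` vertices (an injective map `Fin k → V`) is uniquely
determined by its set of consecutive ordered pairs (directed edges). -/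
theorem path_eq_of_edgeSet_eq
    {V : Type} (k : ℕ) (hk : 2 ≤ k) (p q : Fin k → V)
    (hp : Function.Injective p) (hq : Function.Injective q)
    (hedges :
      {x : V × V | ∃ (i : ℕ) (h : i + 1 < k),
          x = (p ⟨i, Nat.lt_of_succ_lt h⟩, p ⟨i + 1, h⟩)} =
      {x : V × V | ∃ (i : ℕ) (h : i + 1 < k),
          x = (q ⟨i, Nat.lt_of_succ_lt h⟩, q ⟨i + 1, h⟩)}) :
    p = q :=
  path_eq_of_edgeSet_eq_general k hk p q hq hedges
end

section
/- Let V and W be finite types, ℓ ≥ 1, and let S, V_1, …, V_ℓ be subsets of V with S ⊆ V_i for all i, V_i ∩ V_j = S for all i ≠ j, and V_1 ∪ ⋯ ∪ V_ℓ = V. Let H_1, …, H_ℓ : SimpleGraph V be graphs such that every edge of H_i has both endpoints in V_i, let H = H_1 ⊔ ⋯ ⊔ H_ℓ be their union, and let G : SimpleGraph W. Fix a function π : S → W. Then the number of functions h : V → W that are graph homomorphisms from H to G (i.e. H.Adj u v implies G.Adj (h u) (h v)) and satisfy h|_S = π equals the product over i = 1, …, ℓ of the number of functions g : V_i → W satisfying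 g|_S = π such that H_i.Adj u v implies G.Adj (g u) (g v) for all u, v ∈ V_i. -/
/-! A map `h : V → W` extending `π` is the same as a family of maps `Vs i → W` extending `π`:
the pieces overlap only inside `S`, where every member of the family equals `π`, so they glue
uniquely. Since every edge of `⨆ i, Hs i` lies inside a single piece, `h` is a homomorphism
exactly when each of its restrictions is, and the count factorises. -/

open Set

section Gluing

variable {ι V W : Type*} {S : Set V} {Vs : ι → Set V}

abbrev PieceExtension (hSV : ∀ i, S ⊆ Vs i) (π : S → W) (i : ι) : Type _ :=
  {g : Vs i → W // ∀ s : S, g ⟨s.1, hSV i s.2⟩ = π s}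

theorem PieceExtension.apply_eq_of_mem_inter (hSV : ∀ i, S ⊆ Vs i)
    (hcap : ∀ i j, i ≠ j → Vs i ∩ Vs j ⊆ S) {π : S → W} (F : ∀ i, PieceExtension hSV π i)
    {i j : ι} {v : V} (hi : v ∈ Vs i) (hj : v ∈ Vs j) :
    (F i).1 ⟨v, hi⟩ = (F j).1 ⟨v, hj⟩ := by
  rcases eq_or_ne i j with rfl | hij
  · rfl
  · have hvS : v ∈ S := hcap i j hij ⟨hi, hj⟩
    exact ((F i).2 ⟨v, hvS⟩).trans ((F j).2 ⟨v, hvS⟩).symm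

noncomputable def extensionEquivPiPieceExtension (hSV : ∀ i, S ⊆ Vs i)
    (hcap : ∀ i j, i ≠ j → Vs i ∩ Vs j ⊆ S) (hcup : ⋃ i, Vs i = univ) (π : S → W) :
    {h : V → W // ∀ s : S, h s = π s} ≃ ∀ i, PieceExtension hSV π i :=
  have hmem : ∀ v, ∃ i, v ∈ Vs i := iUnion_eq_univ_iff.mp hcup
  { toFun := fun h _ => ⟨fun x => h.1 x, fun s => h.2 s⟩
    invFun := fun F =>
      ⟨fun v => (F (hmem v).choose).1 ⟨v, (hmem v).choose_spec⟩, fun s => (F _).2 s⟩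
    left_inv := fun _ => rfl
    right_inv := fun F => funext fun _ => Subtype.ext <| funext fun x =>
      PieceExtension.apply_eq_of_mem_inter hSV hcap F _ x.2 }

end Gluing

theorem SimpleGraph.iSup_adj_imp_iff {ι V W : Type*} {Vs : ι → Set V}
    {Hs : ι → SimpleGraph V} (hedge : ∀ i u v, (Hs i).Adj u v → u ∈ Vs i ∧ v ∈ Vs i)
    (G : SimpleGraph W) (h : V → W) :
    (∀ u v, (⨆ i, Hs i).Adj u v → G.Adj (h u) (h v)) ↔
      ∀ i (u v : V) (_ : u ∈ Vs i) (_ : v ∈ Vs i), (Hs i).Adj u v → G.Adj (h u) (h v) := by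
  simp only [SimpleGraph.iSup_adj, forall_exists_index]
  exact ⟨fun hom i u v _ _ => hom u v i,
    fun hom u v i huv => hom i u v (hedge i u v huv).1 (hedge i u v huv).2 huv⟩

theorem hom_count_conditional_independence_general
    {V W : Type} (ℓ : ℕ)
    (S : Set V) (Vs : Fin ℓ → Set V)
    (hSV : ∀ i, S ⊆ Vs i)
    (hcap : ∀ i j, i ≠ j → Vs i ∩ Vs j = S)
    (hcup : (⋃ i, Vs i) = Set.univ)
    (Hs : Fin ℓ → SimpleGraph V)
    (hedge : ∀ i u v, (Hs i).Adj u v → u ∈ Vs i ∧ v ∈ Vs i)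
    (H : SimpleGraph V) (hH : H = ⨆ i, Hs i)
    (G : SimpleGraph W) (π : S → W) :
    Nat.card {h : V → W //
        (∀ u v, H.Adj u v → G.Adj (h u) (h v)) ∧ ∀ s : S, h s = π s}
      = ∏ i : Fin ℓ, Nat.card {g : (Vs i) → W //
          (∀ s : S, g ⟨s.1, hSV i s.2⟩ = π s) ∧
          ∀ (u v : V) (hu : u ∈ Vs i) (hv : v ∈ Vs i),
            (Hs i).Adj u v → G.Adj (g ⟨u, hu⟩) (g ⟨v, hv⟩)} := by
  subst hH
  let IsHomOn (i : Fin ℓ) (g : Vs i → W) : Prop :=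
    ∀ (u v : V) (hu : u ∈ Vs i) (hv : v ∈ Vs i), (Hs i).Adj u v → G.Adj (g ⟨u, hu⟩) (g ⟨v, hv⟩)
  have hcap' : ∀ i j, i ≠ j → Vs i ∩ Vs j ⊆ S := fun i j hij => (hcap i j hij).le
  calc _ = Nat.card {h : {h : V → W // ∀ s : S, h s = π s} //
          ∀ u v, (⨆ i, Hs i).Adj u v → G.Adj (h.1 u) (h.1 v)} :=
        Nat.card_congr <| (Equiv.subtypeEquivRight fun _ => and_comm).trans
          (Equiv.subtypeSubtypeEquivSubtypeInter _ _).symm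
    _ = Nat.card {F : ∀ i, PieceExtension hSV π i // ∀ i, IsHomOn i (F i).1} :=
        Nat.card_congr <| (extensionEquivPiPieceExtension hSV hcap' hcup π).subtypeEquiv fun h =>
          SimpleGraph.iSup_adj_imp_iff hedge G h.1
    _ = ∏ i, Nat.card {g : PieceExtension hSV π i // IsHomOn i g.1} := by
        rw [← Nat.card_pi]
        exact Nat.card_congr <|
          Equiv.subtypePiEquivPi (p := fun i (g : PieceExtension hSV π i) => IsHomOn i g.1)
    _ = _ := Fintype.prod_congr _ _ fun i =>
        Nat.card_congr (Equiv.subtypeSubtypeEquivSubtypeInter _ (IsHomOn i))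

/-- Conditional independence of homomorphism counts across the pieces of a
separator decomposition: if the graphs `Hs i` live on sets `Vs i` that pairwise
intersect exactly in `S` and cover `V`, then the number of homomorphisms of
`⨆ i, Hs i` into `G` extending a fixed map `π : S → W` is the product over `i`
of the numbers of homomorphisms of `Hs i` into `G` extending `π`. -/
theorem hom_count_conditional_independence
    {V W : Type} [Fintype V] [Fintype W] (ℓ : ℕ) (hℓ : 1 ≤ ℓ)
    (S : Set V) (Vs : Fin ℓ → Set V)
    (hSV : ∀ i, S ⊆ Vs i)
    (hcap : ∀ i j, i ≠ j → Vs i ∩ Vs j = S)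
    (hcup : (⋃ i, Vs i) = Set.univ)
    (Hs : Fin ℓ → SimpleGraph V)
    (hedge : ∀ i u v, (Hs i).Adj u v → u ∈ Vs i ∧ v ∈ Vs i)
    (H : SimpleGraph V) (hH : H = ⨆ i, Hs i)
    (G : SimpleGraph W) (π : S → W) :
    Nat.card {h : V → W //
        (∀ u v, H.Adj u v → G.Adj (h u) (h v)) ∧ ∀ s : S, h s = π s}
      = ∏ i : Fin ℓ, Nat.card {g : (Vs i) → W //
          (∀ s : S, g ⟨s.1, hSV i s.2⟩ = π s) ∧
          ∀ (u v : V) (hu : u ∈ Vs i) (hv : v ∈ Vs i),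
            (Hs i).Adj u v → G.Adj (g ⟨u, hu⟩) (g ⟨v, hv⟩)} :=
  hom_count_conditional_independence_general ℓ S Vs hSV hcap hcup Hs hedge H hH G π
end
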